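/- arXiv:2408.17019 — 2 statements merged into one kernel-verified Lean document; each statement's English description precedes it below -/
import Mathlib

section
/- If σ ⊆ P(L) × L is downward directed, then (⊢^ρ)^σ ⊆ (⊢^σ)^ρ for any logical structure ⟨L, ⊢⟩ and any ρ ⊆ P(L) × L. Consequently, if both ρ and σ are downward directed, then (⊢^ρ)^σ = (⊢^σ)^ρ. -/
def Comp {L : Type*} (t : Set L → L → Prop) (ρ : Set L → L → Prop)
    (Γ : Set L) (α : L) : Prop :=
  ∃ Δ ⊆ Γ, ρ Δ α ∧ t Δ α

def PComp {L : Type*} (t : Set L → L → Prop) (ρ : Set L → L → Prop)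
    (Γ : Set L) (α : L) : Prop :=
  ∃ Δ ⊆ Γ, Δ.Nonempty ∧ ρ Δ α ∧ t Δ α

theorem key {L : Type*} (t : Set L → L → Prop) (ρ σ : Set L → L → Prop)
    (hσ : ∀ Δ α, σ Δ α → ∀ D ⊆ Δ, σ D α) :
    ∀ Γ α, Comp (Comp t ρ) σ Γ α → Comp (Comp t σ) ρ Γ α := by
  rintro Γ α ⟨Δ, hΔΓ, hσΔ, D, hDΔ, hρD, htD⟩
  exact ⟨D, hDΔ.trans hΔΓ, hρD, D, le_refl _, hσ Δ α hσΔ D hDΔ, htD⟩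

theorem stmt11 {L : Type*} (t : Set L → L → Prop) (ρ σ : Set L → L → Prop)
    (hσ : ∀ Δ α, σ Δ α → ∀ D ⊆ Δ, σ D α) :
    (∀ Γ α, Comp (Comp t ρ) σ Γ α → Comp (Comp t σ) ρ Γ α) ∧
    ((∀ Δ α, ρ Δ α → ∀ D ⊆ Δ, ρ D α) →
      Comp (Comp t ρ) σ = Comp (Comp t σ) ρ) := by
  refine ⟨key t ρ σ hσ, fun hρ => ?_⟩
  funext Γ α
  exact propext ⟨key t ρ σ hσ Γ α, key t σ ρ hρ Γ α⟩
end

section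
/- Suppose L is infinite and ρ ⊆ P(L) × L has finite reach. Then the generalized principle of explosion (gECQ) fails in the ρ-companion: it is not the case that for every α ∈ L there exists β ∈ L such that {α, β} ⊢^ρ γ for all γ ∈ L. -/
theorem stmt15 {L : Type*} [Infinite L] (t : Set L → L → Prop)
    (ρ : Set L → L → Prop) (hρ : ∀ Δ : Set L, {α | ρ Δ α}.Finite) :
    ¬ ∀ α : L, ∃ β : L, ∀ γ : L, Comp t ρ {α, β} γ := by
  intro h
  obtain ⟨α⟩ : Nonempty L := inferInstance
  obtain ⟨β, hβ⟩ := h α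
  have hfin : (Set.univ : Set L).Finite := by
    have h1 : ({α, β} : Set L).Finite := (Set.finite_singleton α).insert β |>.subset (by
      intro x hx; rcases hx with h | h <;> simp_all)
    have h2 : (⋃ Δ ∈ {Δ : Set L | Δ ⊆ {α, β}}, {γ | ρ Δ γ}).Finite :=
      Set.Finite.biUnion h1.finite_subsets (fun Δ _ => hρ Δ)
    refine h2.subset ?_
    intro γ _
    obtain ⟨Δ, hΔ, hρΔ, _⟩ := hβ γ
    exact Set.mem_biUnion hΔ hρΔ
  exact Set.infinite_univ hfin
end
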